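/- Fix m ∈ ℕ, N ∈ ℕ, θ > 0, gains k_0, …, k_m ∈ ℝ, and a symmetric adjacency matrix a : Fin N → Fin N → ℝ. For each agent i ∈ Fin N let σ_i : ℝ → ℝ be m-times differentiable, let x_{i,0}, …, x_{i,m} : ℝ → ℝ be differentiable on [0,∞), and define y_{i,μ}(t) := σ_i^{(μ)}(t) − x_{i,μ}(t). Suppose that for every t ≥ 0 the dynamics ẋ_{i,μ}(t) = θ^{(μ+1)/(m+1)} k_μ Σ_{j=1}^{N} a_{ij} ⌈y_{i,0}(t) − y_{j,0}(t)⌋^{(m−μ)/(m+1)} + x_{i,μ+1}(t) for 0 ≤ μ < m and ẋ_{i,m}(t) = θ k_m Σ_{j=1}^{N} a_{ij} ⌈y_{i,0}(t) − y_{j,0}(t)⌋^0 hold, and that Σ_{i=1}^{N} x_{i,μ}(0) = 0 for every μ ∈ {0,…,m}. Then Σ_{i=1}^{N} x_{i,μ}(t) = 0 for every t ≥ 0 and every μ ∈ {0,…,m}, and consequently (1/N) Σ_{i=1}^{N} y_{i,μ}(t) = (1/N) Σ_{i=1}^{N} σ_i^{(μ)}(t) for every t ≥ 0 and μ ∈ {0,…,m}.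 -/

import Mathlib

open Finset

/-- The signed power `⌈x⌋^α := |x|^α · sign(x)` (with `sign 0 = 0`); for `α = 0` this is
`sign(x)` since `|x|^0 = 1` for the real power. -/
noncomputable def signedPow (x α : ℝ) : ℝ := |x| ^ α * Real.sign x

lemma signedPow_neg (x α : ℝ) : signedPow (-x) α = - signedPow x α := by
  simp [signedPow, Real.sign_neg, abs_neg]

lemma sum_antisym_zero {N : ℕ} (a : Fin N → Fin N → ℝ) (hsym : ∀ i j, a i j = a j i)
    (g : Fin N → ℝ) (α : ℝ) :
    ∑ i : Fin N, ∑ j : Fin N, a i j * signedPow (g i - g j) α = 0 := by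
  have h : ∑ i : Fin N, ∑ j : Fin N, a i j * signedPow (g i - g j) α
      = - ∑ i : Fin N, ∑ j : Fin N, a i j * signedPow (g i - g j) α := by
    conv_lhs => rw [Finset.sum_comm]
    rw [← Finset.sum_neg_distrib]
    refine Finset.sum_congr rfl fun i _ => ?_
    rw [← Finset.sum_neg_distrib]
    refine Finset.sum_congr rfl fun j _ => ?_
    rw [hsym j i, ← neg_sub (g j) (g i), signedPow_neg]
    ring
  linarith

lemma const_of_deriv_zero (f : ℝ → ℝ) (hf : ∀ t, 0 ≤ t → HasDerivAt f 0 t)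
    (h0 : f 0 = 0) : ∀ t, 0 ≤ t → f t = 0 := by
  intro t ht
  have := constant_of_has_deriv_right_zero (f := f) (a := 0) (b := t)
    (fun s hs => (hf s hs.1).continuousAt.continuousWithinAt)
    (fun s hs => (hf s hs.1).hasDerivWithinAt) t (Set.right_mem_Icc.2 ht)
  rw [this, h0]

/-- Along any solution of the modulated dynamic consensus protocol over an
undirected network with zero-sum initial internal states, the internal states keep zero sum
for all `t ≥ 0`, and hence the average of the outputs equals the average of the (modulated)
input signals' derivatives. -/
theorem modulated_consensus_average_preservation
    (m N : ℕ) (θ : ℝ) (hθ : 0 < θ) (k : ℕ → ℝ)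
    (a : Fin N → Fin N → ℝ) (hsym : ∀ i j, a i j = a j i)
    (σ : Fin N → ℝ → ℝ)
    (hσ : ∀ i, ∀ μ < m, Differentiable ℝ (iteratedDeriv μ (σ i)))
    (x : Fin N → ℕ → ℝ → ℝ)
    (hxdiff : ∀ i : Fin N, ∀ μ ≤ m, DifferentiableOn ℝ (x i μ) (Set.Ici (0 : ℝ)))
    (y : Fin N → ℕ → ℝ → ℝ)
    (hy : ∀ i μ t, y i μ t = iteratedDeriv μ (σ i) t - x i μ t)
    (hdyn : ∀ t : ℝ, 0 ≤ t → ∀ i : Fin N, ∀ μ < m,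
      HasDerivAt (x i μ)
        (θ ^ (((μ : ℝ) + 1) / ((m : ℝ) + 1)) * k μ *
          (∑ j : Fin N, a i j *
            signedPow (y i 0 t - y j 0 t) (((m : ℝ) - (μ : ℝ)) / ((m : ℝ) + 1)))
          + x i (μ + 1) t) t)
    (hdynm : ∀ t : ℝ, 0 ≤ t → ∀ i : Fin N,
      HasDerivAt (x i m)
        (θ * k m * (∑ j : Fin N, a i j * signedPow (y i 0 t - y j 0 t) 0)) t)
    (hinit : ∀ μ ≤ m, ∑ i : Fin N, x i μ 0 = 0) :
    (∀ t : ℝ, 0 ≤ t → ∀ μ ≤ m, ∑ i : Fin N, x i μ t = 0) ∧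
    (∀ t : ℝ, 0 ≤ t → ∀ μ ≤ m,
      (1 / (N : ℝ)) * ∑ i : Fin N, y i μ t =
        (1 / (N : ℝ)) * ∑ i : Fin N, iteratedDeriv μ (σ i) t) := by
  have key : ∀ d μ, μ + d = m → ∀ t : ℝ, 0 ≤ t → ∑ i : Fin N, x i μ t = 0 := by
    intro d
    induction d with
    | zero =>
      intro μ hμ t ht
      have hμm : μ = m := by omega
      subst hμm
      refine const_of_deriv_zero (fun t => ∑ i : Fin N, x i μ t) ?_ (hinit μ le_rfl) t ht
      intro s hs
      have hd := HasDerivAt.fun_sum (fun i (_ : i ∈ Finset.univ) => hdynm s hs i)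
      have h0 : (∑ i : Fin N, θ * k μ *
          (∑ j : Fin N, a i j * signedPow (y i 0 s - y j 0 s) 0)) = 0 := by
        rw [← Finset.mul_sum, sum_antisym_zero a hsym (fun i => y i 0 s) 0, mul_zero]
      rwa [h0] at hd
    | succ d ih =>
      intro μ hμ t ht
      have hμm : μ < m := by omega
      refine const_of_deriv_zero (fun t => ∑ i : Fin N, x i μ t) ?_
        (hinit μ (by omega)) t ht
      intro s hs
      have hd := HasDerivAt.fun_sum (fun i (_ : i ∈ Finset.univ) => hdyn s hs i μ hμm)
      have h0 : (∑ i : Fin N, (θ ^ (((μ : ℝ) + 1) / ((m : ℝ) + 1)) * k μ *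
          (∑ j : Fin N, a i j *
            signedPow (y i 0 s - y j 0 s) (((m : ℝ) - (μ : ℝ)) / ((m : ℝ) + 1)))
          + x i (μ + 1) s)) = 0 := by
        rw [Finset.sum_add_distrib, ← Finset.mul_sum,
          sum_antisym_zero a hsym (fun i => y i 0 s), ih (μ + 1) (by omega) s hs, mul_zero,
          add_zero]
      rwa [h0] at hd
  have part1 : ∀ t : ℝ, 0 ≤ t → ∀ μ ≤ m, ∑ i : Fin N, x i μ t = 0 := by
    intro t ht μ hμ
    exact key (m - μ) μ (by omega) t ht
  refine ⟨part1, fun t ht μ hμ => ?_⟩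
  have : ∑ i : Fin N, y i μ t = ∑ i : Fin N, iteratedDeriv μ (σ i) t := by
    simp only [hy, Finset.sum_sub_distrib, part1 t ht μ hμ, sub_zero]
  rw [this]
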